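/- arXiv:2203.03721 — 4 statements merged into one kernel-verified Lean document; each statement's English description precedes it below -/
import Mathlib

section
/- Let γ(t) = [[cosh t · I_n, sinh t · I_n],[sinh t · I_n, cosh t · I_n]] act on the unitary group U_n by T ∗ U = (AU+B)(CU+D)^{-1} for T = [[A,B],[C,D]]. If q ∈ U_n has no eigenvalue equal to -1, then lim_{t→+∞} γ(t) ∗ q = I_n. -/
open Matrix Filter Topology

private lemma tanh_tendsto_one' : Tendsto Real.tanh atTop (𝓝 1) := by
  have h2 : Tendsto (fun t : ℝ => Real.exp (-(2*t))) atTop (𝓝 0) := by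
    have : Tendsto (fun t : ℝ => -(2*t)) atTop atBot := by
      apply tendsto_neg_atTop_atBot.comp
      exact (tendsto_const_mul_atTop_of_pos (by norm_num)).mpr tendsto_id
    exact Real.tendsto_exp_atBot.comp this
  have key : ∀ t : ℝ, Real.tanh t = (1 - Real.exp (-(2*t))) / (1 + Real.exp (-(2*t))) := by
    intro t
    have hab : Real.exp t * Real.exp (-t) = 1 := by
      rw [← Real.exp_add]; simp
    have h2t : Real.exp (-(2*t)) = Real.exp (-t) * Real.exp (-t) := by
      rw [← Real.exp_add]; ring_nf
    have hpos1 : 0 < Real.exp t + Real.exp (-t) := by positivity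
    have hpos2 : (0:ℝ) < 1 + Real.exp (-(2*t)) := by positivity
    rw [Real.tanh_eq_sinh_div_cosh, Real.sinh_eq, Real.cosh_eq, h2t]
    field_simp
    ring_nf
    nlinarith [hab]
  have hnum : Tendsto (fun t : ℝ => 1 - Real.exp (-(2*t))) atTop (𝓝 1) := by
    simpa using (tendsto_const_nhds (x := (1:ℝ))).sub h2
  have hden : Tendsto (fun t : ℝ => 1 + Real.exp (-(2*t))) atTop (𝓝 1) := by
    simpa using (tendsto_const_nhds (x := (1:ℝ))).add h2
  have := hnum.div hden one_ne_zero
  simp only [div_one] at this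
  exact Tendsto.congr (fun t => (key t).symm) this

private lemma smul_matrix_inv' {n : ℕ} (c : ℂ) (hc : c ≠ 0) (Y : Matrix (Fin n) (Fin n) ℂ) :
    (c • Y)⁻¹ = c⁻¹ • Y⁻¹ := by
  cases n with
  | zero => exact Subsingleton.elim _ _
  | succ m =>
    rw [Matrix.inv_def, Matrix.inv_def, Matrix.adjugate_smul, Matrix.det_smul,
      Fintype.card_fin, smul_smul, smul_smul]
    congr 1
    simp only [Ring.inverse_eq_inv', mul_inv, Nat.add_sub_cancel]
    have h1 : (c ^ (m + 1))⁻¹ * c ^ m = c⁻¹ := by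
      field_simp
      ring
    rw [mul_right_comm, h1]

private lemma real_smul_matrix' {n : ℕ} (r : ℝ) (M : Matrix (Fin n) (Fin n) ℂ) :
    r • M = (r : ℂ) • M := by
  ext i j
  simp [Matrix.smul_apply, Complex.real_smul]

/-- If `q ∈ U_n` has no eigenvalue equal to `-1`, then under the Möbius action of the
curve `γ(t) = [[cosh t • I, sinh t • I],[sinh t • I, cosh t • I]] ∈ U(n,n)`, namely
`γ(t) ∗ q = (cosh t • q + sinh t • I)(sinh t • q + cosh t • I)⁻¹`, one has
`lim_{t → +∞} γ(t) ∗ q = I`. -/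
theorem mobius_flow_tendsto_one {n : ℕ} (q : Matrix.unitaryGroup (Fin n) ℂ)
    (hq : ∀ lam : ℂ, ((q : Matrix (Fin n) (Fin n) ℂ) - lam • 1).det = 0 → lam ≠ -1) :
    Tendsto
      (fun t : ℝ =>
        (Real.cosh t • (q : Matrix (Fin n) (Fin n) ℂ) + Real.sinh t • 1) *
          (Real.sinh t • (q : Matrix (Fin n) (Fin n) ℂ) + Real.cosh t • 1)⁻¹)
      atTop (𝓝 (1 : Matrix (Fin n) (Fin n) ℂ)) := by
  set Q : Matrix (Fin n) (Fin n) ℂ := (q : Matrix (Fin n) (Fin n) ℂ) with hQ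
  have hdet : (Q + 1).det ≠ 0 := by
    intro h
    refine hq (-1) ?_ rfl
    rw [show Q - (-1 : ℂ) • 1 = Q + 1 by simp]
    exact h
  -- the auxiliary continuous family
  have hco : Continuous (fun s : ℝ => (s : ℂ)) := Complex.continuous_ofReal
  have c1 : Continuous (fun s : ℝ => Q + (s : ℂ) • (1 : Matrix (Fin n) (Fin n) ℂ)) :=
    continuous_const.add (hco.smul continuous_const)
  have c2 : Continuous (fun s : ℝ => (s : ℂ) • Q + 1) :=
    (hco.smul continuous_const).add continuous_const
  have cinv : ContinuousAt Inv.inv (((1:ℝ) : ℂ) • Q + 1) := by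
    apply continuousAt_matrix_inv
    rw [Ring.inverse_eq_inv']
    apply continuousAt_inv₀
    simpa using hdet
  have hFinv : ContinuousAt (fun s : ℝ => ((s : ℂ) • Q + 1)⁻¹) 1 :=
    ContinuousAt.comp cinv c2.continuousAt
  have hF : ContinuousAt
      (fun s : ℝ => (Q + (s : ℂ) • 1) * ((s : ℂ) • Q + 1)⁻¹) 1 :=
    (c1.continuousAt).mul hFinv
  have hval : (Q + ((1:ℝ) : ℂ) • 1) * (((1:ℝ) : ℂ) • Q + 1)⁻¹ = 1 := by
    simp only [Complex.ofReal_one, one_smul]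
    exact Matrix.mul_nonsing_inv _ (isUnit_iff_ne_zero.mpr hdet)
  have hT : Tendsto
      (fun t : ℝ => (Q + ((Real.tanh t : ℝ) : ℂ) • 1) * (((Real.tanh t : ℝ) : ℂ) • Q + 1)⁻¹)
      atTop (𝓝 (1 : Matrix (Fin n) (Fin n) ℂ)) := by
    have := (hF.tendsto).comp tanh_tendsto_one'
    rwa [hval] at this
  refine Tendsto.congr' ?_ hT
  filter_upwards [eventually_gt_atTop (0:ℝ)] with t ht
  have hc : ((Real.cosh t : ℝ) : ℂ) ≠ 0 :=
    Complex.ofReal_ne_zero.mpr (Real.cosh_pos t).ne'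
  have hre : Real.sinh t = Real.cosh t * Real.tanh t := by
    rw [Real.tanh_eq_sinh_div_cosh]
    field_simp
  have hs : ((Real.sinh t : ℝ) : ℂ) = ((Real.cosh t : ℝ) : ℂ) * ((Real.tanh t : ℝ) : ℂ) := by
    rw [hre, Complex.ofReal_mul]
  rw [real_smul_matrix', real_smul_matrix', real_smul_matrix', real_smul_matrix', hs]
  set c : ℂ := ((Real.cosh t : ℝ) : ℂ)
  set τ : ℂ := ((Real.tanh t : ℝ) : ℂ)
  have e1 : c • Q + (c * τ) • (1 : Matrix (Fin n) (Fin n) ℂ) = c • (Q + τ • 1) := by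
    rw [smul_add, smul_smul]
  have e2 : (c * τ) • Q + c • (1 : Matrix (Fin n) (Fin n) ℂ) = c • (τ • Q + 1) := by
    rw [smul_add, smul_smul]
  rw [e1, e2, smul_matrix_inv' c hc, Matrix.smul_mul, Matrix.mul_smul, smul_smul,
    mul_inv_cancel₀ hc, one_smul]
end

section
/- If T ∈ SU(n,n) satisfies T ∗ U = U for all U ∈ U_n (Möbius action), then T = u·I_{2n} for some u ∈ ℂ with u^{2n} = 1. Hence the Möbius action of SU(n,n) on U_n is almost effective. -/
/-!
Write `T = [[A, B], [C, D]]`. For a unitary `U` the denominator `CU + D` is invertible (otherwise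
`T ∗ U` would be `0`), so `T ∗ U = U` says `AU + B = UCU + UD`. Comparing this at `U` and `-U`
separates the odd and even parts in `U`: `AU = UD` and `B = UCU`. Taking `U = 1` and `U = iI`
gives `A = D` and `B = C = -C`, so `B = C = 0`, and `A` commutes with every unitary matrix. Since
`Eᵢⱼ = ½ (1 - (1 - 2Eᵢᵢ)) P₍ᵢ ⱼ₎` is built from the unitaries `1 - 2Eᵢᵢ` and the transposition
matrices, `A` commutes with every matrix unit, so `A = uI` is scalar, `T = u I_{2n}`, and
`det T = 1` gives `u^{2n} = 1`.
-/

open Matrix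

/-- `δ = diag(I_n, -I_n)` over `ℂ`. -/
def deltaMatC (n : ℕ) : Matrix (Fin n ⊕ Fin n) (Fin n ⊕ Fin n) ℂ :=
  Matrix.fromBlocks 1 0 0 (-1)

/-- The Möbius action `[[A,B],[C,D]] ∗ U = (AU + B)(CU + D)⁻¹` on `U_n`. -/
noncomputable def mobiusC {n : ℕ} (T : Matrix (Fin n ⊕ Fin n) (Fin n ⊕ Fin n) ℂ)
    (U : Matrix (Fin n) (Fin n) ℂ) : Matrix (Fin n) (Fin n) ℂ :=
  (T.toBlocks₁₁ * U + T.toBlocks₁₂) * (T.toBlocks₂₁ * U + T.toBlocks₂₂)⁻¹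

namespace Matrix

variable {n R : Type*} [Fintype n] [DecidableEq n] [CommRing R]

lemma single_one_eq_single_mul_permMatrix_swap (i j : n) :
    single i j (1 : R) = single i i 1 * (Equiv.swap i j).permMatrix R := by
  ext a b
  rcases eq_or_ne a i with rfl | ha
  · simp [single_mul_apply_same, PEquiv.toMatrix_apply, single_apply]
  · simp [single_mul_apply_of_ne (h := ha), Ne.symm ha]

variable [StarRing R]

lemma one_sub_two_smul_single_mem_unitaryGroup (i : n) :
    1 - (2 : R) • single i i 1 ∈ unitaryGroup n R := by
  rw [mem_unitaryGroup_iff', star_eq_conjTranspose]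
  simp only [conjTranspose_sub, conjTranspose_one, conjTranspose_smul, conjTranspose_single,
    star_one, star_ofNat, sub_mul, mul_sub, smul_mul_assoc, mul_smul_comm,
    single_mul_single_same, mul_one, one_mul]
  module

lemma permMatrix_mem_unitaryGroup (σ : Equiv.Perm n) : σ.permMatrix R ∈ unitaryGroup n R := by
  rw [mem_unitaryGroup_iff', star_eq_conjTranspose, conjTranspose_permMatrix, ← permMatrix_mul,
    mul_inv_cancel, permMatrix_one]

lemma commute_single_of_forall_commute_unitary [Invertible (2 : R)] {A : Matrix n n R}
    (hA : ∀ U ∈ unitaryGroup n R, Commute U A) (i j : n) : Commute (single i j 1) A := by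
  have hii : Commute (single i i (1 : R)) A := by
    simpa [smul_smul] using ((Commute.one_left A).sub_left
      (hA _ (one_sub_two_smul_single_mem_unitaryGroup i))).smul_left (⅟2 : R)
  rw [single_one_eq_single_mul_permMatrix_swap]
  exact hii.mul_left (hA _ (permMatrix_mem_unitaryGroup _))

lemma mem_range_scalar_of_forall_commute_unitary [Invertible (2 : R)] {A : Matrix n n R}
    (hA : ∀ U ∈ unitaryGroup n R, Commute U A) : A ∈ Set.range (scalar n) :=
  mem_range_scalar_iff_commute_single'.2 (commute_single_of_forall_commute_unitary hA)

end Matrix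

lemma exists_eq_smul_one_of_forall_unitary {n : Type*} [Fintype n] [DecidableEq n]
    {T : Matrix (n ⊕ n) (n ⊕ n) ℂ}
    (hT : ∀ U ∈ unitaryGroup n ℂ,
      T.toBlocks₁₁ * U = U * T.toBlocks₂₂ ∧ T.toBlocks₁₂ = U * T.toBlocks₂₁ * U) :
    ∃ u : ℂ, T = u • 1 := by
  have hI : Complex.I • (1 : Matrix n n ℂ) ∈ unitaryGroup n ℂ := by
    rw [mem_unitaryGroup_iff', star_smul, star_one, smul_mul_smul_comm, mul_one,
      Complex.star_def, Complex.conj_I, neg_mul, Complex.I_mul_I, neg_neg, one_smul]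
  have hAD : T.toBlocks₁₁ = T.toBlocks₂₂ := by simpa using (hT 1 (one_mem _)).1
  have hBC : T.toBlocks₁₂ = T.toBlocks₂₁ := by simpa using (hT 1 (one_mem _)).2
  have hBC' : T.toBlocks₁₂ = -T.toBlocks₂₁ := by simpa [smul_smul] using (hT _ hI).2
  have hC : T.toBlocks₂₁ = 0 := by
    ext i j
    simpa [self_eq_neg] using congr($(hBC.symm.trans hBC') i j)
  obtain ⟨u, hu⟩ := mem_range_scalar_of_forall_commute_unitary fun U hU =>
    ((hT U hU).1.trans (by rw [hAD])).symm
  refine ⟨u, ?_⟩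
  rw [← fromBlocks_toBlocks T, hBC, hC, ← hAD, ← hu, scalar_apply, ← smul_one_eq_diagonal,
    ← fromBlocks_one, fromBlocks_smul, smul_zero]

section Mobius

variable {n : ℕ} {T : Matrix (Fin n ⊕ Fin n) (Fin n ⊕ Fin n) ℂ} {U : Matrix (Fin n) (Fin n) ℂ}

lemma toBlocks₁₁_mul_add_eq_of_mobiusC_eq_self (hU : IsUnit U) (h : mobiusC T U = U) :
    T.toBlocks₁₁ * U + T.toBlocks₁₂ = U * (T.toBlocks₂₁ * U + T.toBlocks₂₂) := by
  by_cases hden : IsUnit (T.toBlocks₂₁ * U + T.toBlocks₂₂).det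
  · calc _ = mobiusC T U * (T.toBlocks₂₁ * U + T.toBlocks₂₂) := by
          rw [mobiusC, mul_assoc, nonsing_inv_mul _ hden, mul_one]
      _ = _ := by rw [h]
  · -- the junk inverse `0` forces `U = 0`, and a unit `0` makes the matrix ring trivial
    rw [mobiusC, nonsing_inv_apply_not_isUnit _ hden, mul_zero] at h
    rw [← h, isUnit_zero_iff] at hU
    have := subsingleton_of_zero_eq_one hU
    exact Subsingleton.elim _ _

lemma toBlocks_eq_of_mobiusC_eq_self_of_neg (hU : IsUnit U) (h : mobiusC T U = U)
    (hneg : mobiusC T (-U) = -U) :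
    T.toBlocks₁₁ * U = U * T.toBlocks₂₂ ∧ T.toBlocks₁₂ = U * T.toBlocks₂₁ * U := by
  have e₁ := toBlocks₁₁_mul_add_eq_of_mobiusC_eq_self hU h
  have e₂ := toBlocks₁₁_mul_add_eq_of_mobiusC_eq_self hU.neg hneg
  simp only [mul_add, mul_neg, neg_mul, neg_neg, ← mul_assoc] at e₁ e₂
  constructor
  · apply smul_right_injective _ (two_ne_zero (α := ℂ))
    linear_combination (norm := module) e₁ - e₂
  · apply smul_right_injective _ (two_ne_zero (α := ℂ))
    linear_combination (norm := module) e₁ + e₂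

end Mobius

theorem mobius_SU_almost_effective_general {n : ℕ}
    (T : Matrix (Fin n ⊕ Fin n) (Fin n ⊕ Fin n) ℂ)
    (hdet : T.det = 1)
    (h : ∀ U : Matrix (Fin n) (Fin n) ℂ, Uᴴ * U = 1 → mobiusC T U = U) :
    ∃ u : ℂ, u ^ (2 * n) = 1 ∧ T = u • (1 : Matrix (Fin n ⊕ Fin n) (Fin n ⊕ Fin n) ℂ) := by
  obtain ⟨u, hTu⟩ := exists_eq_smul_one_of_forall_unitary (T := T) fun U hU =>
    have hU' : Uᴴ * U = 1 := mem_unitaryGroup_iff'.1 hU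
    toBlocks_eq_of_mobiusC_eq_self_of_neg (Unitary.isUnit_coe (U := ⟨U, hU⟩)) (h U hU')
      (h (-U) (by rw [conjTranspose_neg, neg_mul_neg, hU']))
  refine ⟨u, ?_, hTu⟩
  rw [← hdet, hTu, det_smul, det_one, mul_one, Fintype.card_sum, Fintype.card_fin, two_mul]

/-- If `T ∈ SU(n,n)` satisfies `T ∗ U = U` for all `U ∈ U_n`, then `T = u • I_{2n}`
for some `u ∈ ℂ` with `u^{2n} = 1`; hence the Möbius action of `SU(n,n)` on `U_n` is
almost effective. -/
theorem mobius_SU_almost_effective {n : ℕ}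
    (T : Matrix (Fin n ⊕ Fin n) (Fin n ⊕ Fin n) ℂ)
    (hT : Tᴴ * deltaMatC n * T = deltaMatC n) (hdet : T.det = 1)
    (h : ∀ U : Matrix (Fin n) (Fin n) ℂ, Uᴴ * U = 1 → mobiusC T U = U) :
    ∃ u : ℂ, u ^ (2 * n) = 1 ∧ T = u • (1 : Matrix (Fin n ⊕ Fin n) (Fin n ⊕ Fin n) ℂ) :=
  mobius_SU_almost_effective_general T hdet h
end

section
/- For all quaternions α, β ∈ ℍ, viewed as column vectors in ℝ⁴ via the identification ℍ ≅ ℝ⁴, one has 4(αβ^T - βα^T) = L_{αβ̄ - βᾱ} - R_{ᾱβ - β̄α}, as linear endomorphisms of ℍ ≅ ℝ⁴. -/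
open Quaternion
open scoped Quaternion RealInnerProductSpace

/-
The real inner product on `ℍ` is a real part, `2⟪a, b⟫ = a b̄ + b ā = b̄ a + ā b`.
Since it is real it commutes with `α`, so `4⟪β, x⟫α = α (x̄ β + β̄ x) + (β x̄ + x β̄) α`.
Subtracting the same expansion with `α` and `β` exchanged, the terms `α x̄ β` and `β x̄ α`
cancel, and what remains is `(α β̄ - β ᾱ) x - x (ᾱ β - β̄ α)`.
-/

namespace Quaternion

theorem re_mul_comm {R : Type*} [CommRing R] (a b : ℍ[R]) : (a * b).re = (b * a).re := by
  simp only [re_mul]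
  ring

theorem coe_two_inner_eq_mul_star_add_mul_star (a b : ℍ) :
    ((2 * ⟪a, b⟫ : ℝ) : ℍ) = a * star b + b * star a := by
  rw [inner_def, ← self_add_star', star_mul, star_star]

theorem coe_two_inner_eq_star_mul_add_star_mul (a b : ℍ) :
    ((2 * ⟪a, b⟫ : ℝ) : ℍ) = star b * a + star a * b := by
  rw [inner_def, re_mul_comm, ← self_add_star', star_mul, star_star]

theorem four_inner_smul_eq (a b x : ℍ) :
    (4 : ℝ) • (⟪b, x⟫ • a) = a * (star x * b + star b * x) + (b * star x + x * star b) * a := by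
  rw [← coe_two_inner_eq_star_mul_add_star_mul, ← coe_two_inner_eq_mul_star_add_mul_star,
    mul_coe_eq_smul, coe_mul_eq_smul, ← add_smul, smul_smul]
  congr 1
  ring

end Quaternion

/-- Here `(αβᵀ)x = ⟪β, x⟫ • α`, `L_p x = p x` and `R_p x = x p`. -/
theorem four_rank_one_skew_eq_left_sub_right (α β x : ℍ[ℝ]) :
    (4 : ℝ) • (⟪β, x⟫ • α - ⟪α, x⟫ • β) =
      (α * star β - β * star α) * x - x * (star α * β - star β * α) := by
  rw [smul_sub, four_inner_smul_eq, four_inner_smul_eq]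
  noncomm_ring
end

section
/- Let Z = L_ξ + R_η with ξ, η ∈ Im ℍ, viewed as a skew-symmetric endomorphism of ℍ ≅ ℝ⁴. If Z² = -λ²·I₄ for some real λ ≠ 0, then ξ = 0 or η = 0. -/
open Quaternion
open scoped Quaternion

/-!
Expanding `Z² = (L_ξ + R_η)²` with `ξ² = -|ξ|²` and `η² = -|η|²` gives
`Z² x = -(|ξ|² + |η|²) x + 2 ξ x η`, so if `Z²` is a scalar then so is `L_ξ R_η`, say `ξ x η = r x`.
Taking `x = 1` gives `ξ η = r`, hence `ξ x η = ξ η x` for all `x`; cancelling `ξ ≠ 0` shows that `η`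
is central in `ℍ`, i.e. real, and a purely imaginary real quaternion vanishes.
-/

theorem mul_mul_eq_smul_of_mul_self_eq_algebraMap {K R : Type*} [Field K] [NeZero (2 : K)]
    [Ring R] [Algebra K R] {a b : R} {s t μ : K}
    (ha : a * a = algebraMap K R s) (hb : b * b = algebraMap K R t)
    (h : ∀ x, a * (a * x + x * b) + (a * x + x * b) * b = μ • x) (x : R) :
    a * x * b = ((μ - s - t) / 2) • x := by
  have hexpand : a * (a * x + x * b) + (a * x + x * b) * b
      = (s + t) • x + (2 : K) • (a * x * b) :=
    calc _ = a * a * x + x * (b * b) + (a * x * b + a * x * b) := by noncomm_ring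
      _ = _ := by
        rw [ha, hb, ← Algebra.commutes, ← Algebra.smul_def, ← Algebra.smul_def, add_smul,
          two_smul]
  rw [h, ← sub_eq_iff_eq_add', ← sub_smul] at hexpand
  rw [div_eq_inv_mul, mul_smul, sub_sub, hexpand, smul_smul, inv_mul_cancel₀ two_ne_zero,
    one_smul]

theorem eq_zero_or_forall_commute_of_mul_mul_eq_smul {K R : Type*} [CommSemiring K] [Ring R]
    [NoZeroDivisors R] [Algebra K R] {a b : R} {r : K} (h : ∀ x, a * x * b = r • x) :
    a = 0 ∨ ∀ x, Commute b x := by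
  refine or_iff_not_imp_left.2 fun ha x => (mul_left_cancel₀ ha ?_).symm
  calc a * (x * b) = r • x := by rw [← mul_assoc, h]
    _ = a * b * x := by rw [show a * b = r • 1 by simpa using h 1, smul_one_mul]
    _ = a * (b * x) := mul_assoc ..

namespace Quaternion

variable {R : Type*} [CommRing R]

theorem mul_self_of_re_eq_zero {a : ℍ[R]} (ha : a.re = 0) :
    a * a = algebraMap R ℍ[R] (-normSq a) := by
  have hstar : star a = -a := by ext <;> simp [ha]
  rw [algebraMap_def, coe_neg, ← self_mul_star, hstar, mul_neg, neg_neg]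

theorem eq_coe_re_of_forall_commute [NoZeroDivisors R] [CharZero R] {q : ℍ[R]}
    (hq : ∀ x, Commute q x) : q = q.re := by
  -- `i` and `j` go through `equivTuple`: an anonymous constructor would elaborate in
  -- `ℍ[R,-1,0,-1]`, where the `Quaternion.*_mul` lemmas do not fire.
  have hi := Quaternion.ext_iff.1 (hq ((equivTuple R).symm ![0, 1, 0, 0])).eq
  have hj := Quaternion.ext_iff.1 (hq ((equivTuple R).symm ![0, 0, 1, 0])).eq
  simp only [re_mul, imI_mul, imJ_mul, imK_mul] at hi hj
  simp only [equivTuple_symm_apply, Matrix.cons_val_zero, Matrix.cons_val_one, Matrix.cons_val,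
    mul_zero, mul_one, zero_sub, sub_zero, zero_mul, one_mul, add_zero, zero_add, sub_self,
    self_eq_neg, neg_eq_self, true_and] at hi hj
  ext <;> simp [hi, hj]

end Quaternion

theorem square_scalar_implies_one_side_zero_general (ξ η : ℍ[ℝ]) (hξ : ξ.re = 0) (hη : η.re = 0)
    (lam : ℝ)
    (h : ∀ x : ℍ[ℝ], ξ * (ξ * x + x * η) + (ξ * x + x * η) * η = -(lam ^ 2) • x) :
    ξ = 0 ∨ η = 0 := by
  have hscalar := mul_mul_eq_smul_of_mul_self_eq_algebraMap
    (mul_self_of_re_eq_zero hξ) (mul_self_of_re_eq_zero hη) h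
  refine (eq_zero_or_forall_commute_of_mul_mul_eq_smul hscalar).imp_right fun hcentral => ?_
  rw [eq_coe_re_of_forall_commute hcentral, hη, coe_zero]

/-- Let `Z = L_ξ + R_η` with `ξ, η ∈ Im ℍ`, a skew-symmetric endomorphism of `ℍ ≅ ℝ⁴`.
If `Z² = -λ² • I₄` for some real `λ ≠ 0`, then `ξ = 0` or `η = 0`. -/
theorem square_scalar_implies_one_side_zero (ξ η : ℍ[ℝ]) (hξ : ξ.re = 0) (hη : η.re = 0)
    (lam : ℝ) (hlam : lam ≠ 0)
    (h : ∀ x : ℍ[ℝ], ξ * (ξ * x + x * η) + (ξ * x + x * η) * η = -(lam ^ 2) • x) :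
    ξ = 0 ∨ η = 0 :=
  square_scalar_implies_one_side_zero_general ξ η hξ hη lam h
end
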